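/- arXiv:2402.06273 — 10 statements merged into one kernel-verified Lean document; each statement's English description precedes it below -/
import Mathlib

section
/- Let R be a commutative ring satisfying the descending chain condition on annihilator ideals. Then the set Ass R of associated primes of R is finite. -/
/-!
Annihilator ideals are exactly the ideals with `ann (ann I) = I`, and `ann` reverses inclusion, so
DCC on them also gives ACC: every nonempty family of annihilators of elements has a maximal member.

An associated prime `p = √ann(x)` is then itself the annihilator of an element. Maximizing
`ann(r x)` over `r ∉ p` gives a `p`-primary annihilator `ann(y)`, and an annihilator maximal among
those of the nonzero multiples of `y` is a prime lying between `ann(y)` and `√ann(y) = p`.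

Finally, let `T` be an infinite set of primes that are annihilator ideals. Finite intersections of
annihilators are annihilators, so by DCC some finite `F ⊆ T` has minimal intersection; every
`q ∈ T` contains `⋂ F`, hence some member of `F`, so some `p ∈ F` lies strictly below infinitely
many members of `T`. By ACC there is a maximal such `p`, and applying this to the members of `T`
above it contradicts the maximality.
-/

open Submodule

def annihilatorIdeals (R : Type*) [CommSemiring R] : Set (Ideal R) :=
  {I | ∃ S : Set R, I = (span R S).annihilator}

section

variable {R : Type*} [CommSemiring R]

theorem Ideal.le_annihilator_comm {I J : Ideal R} :
    I ≤ J.annihilator ↔ J ≤ I.annihilator := by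
  simp only [SetLike.le_def, mem_annihilator, smul_eq_mul]
  exact ⟨fun h j hj i hi => mul_comm i j ▸ h hi j hj,
    fun h i hi j hj => mul_comm j i ▸ h hj i hi⟩

theorem Ideal.annihilator_annihilator_annihilator (I : Ideal R) :
    I.annihilator.annihilator.annihilator = I.annihilator :=
  le_antisymm (annihilator_mono (Ideal.le_annihilator_comm.mp le_rfl))
    (Ideal.le_annihilator_comm.mp le_rfl)

theorem annihilator_annihilator_of_mem_annihilatorIdeals {I : Ideal R}
    (hI : I ∈ annihilatorIdeals R) : I.annihilator.annihilator = I := by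
  obtain ⟨S, rfl⟩ := hI
  exact Ideal.annihilator_annihilator_annihilator _

theorem annihilator_span_singleton_mem_annihilatorIdeals (x : R) :
    (R ∙ x).annihilator ∈ annihilatorIdeals R :=
  ⟨{x}, rfl⟩

theorem annihilator_mem_annihilatorIdeals (I : Ideal R) : I.annihilator ∈ annihilatorIdeals R :=
  ⟨I, by rw [span_eq]⟩

theorem Finset.inf_mem_annihilatorIdeals {ι : Type*} (s : Finset ι) {f : ι → Ideal R}
    (hf : ∀ i ∈ s, f i ∈ annihilatorIdeals R) : s.inf f ∈ annihilatorIdeals R := by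
  refine Finset.inf_mem (annihilatorIdeals R) ⟨∅, by simp [annihilator_bot]⟩ ?_ s f hf
  rintro _ ⟨S, rfl⟩ _ ⟨S', rfl⟩
  exact ⟨S ∪ S', by rw [span_union, annihilator_sup]⟩

theorem wellFoundedOn_lt_annihilatorIdeals
    (hdcc : ∀ f : ℕ → Ideal R, (∀ n, f (n + 1) ≤ f n) →
      (∀ n, f n ∈ annihilatorIdeals R) →
      ∃ n, ∀ m, n ≤ m → f m = f n) :
    (annihilatorIdeals R).WellFoundedOn (· < ·) := by
  rw [Set.wellFoundedOn_iff_no_descending_seq]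
  intro f hf
  obtain ⟨n, hn⟩ := hdcc f (fun n => (f.map_rel_iff.mpr n.lt_succ_self).le) hf
  exact (f.map_rel_iff.mpr n.lt_succ_self).ne (hn (n + 1) n.le_succ)

theorem wellFoundedOn_gt_annihilatorIdeals
    (hlt : (annihilatorIdeals R).WellFoundedOn (· < ·)) :
    (annihilatorIdeals R).WellFoundedOn (· > ·) := by
  refine (hlt.mapsTo annihilator fun I _ => annihilator_mem_annihilatorIdeals I).mono' ?_
  intro I hI J hJ hlt
  refine lt_of_le_of_ne (annihilator_mono hlt.le) fun h => hlt.ne' ?_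
  rw [← annihilator_annihilator_of_mem_annihilatorIdeals hI,
    ← annihilator_annihilator_of_mem_annihilatorIdeals hJ, h]

theorem mem_annihilator_span_singleton_iff_mul {x r : R} :
    r ∈ (R ∙ x).annihilator ↔ r * x = 0 := by
  rw [mem_annihilator_span_singleton, smul_eq_mul]

theorem annihilator_span_singleton_le_mul (b x : R) :
    (R ∙ x).annihilator ≤ (R ∙ (b * x)).annihilator :=
  annihilator_mono <| (span_singleton_le_iff_mem _ _).mpr <|
    smul_mem _ b <| mem_span_singleton_self x

theorem exists_maximal_annihilator_span_singleton
    (hgt : (annihilatorIdeals R).WellFoundedOn (· > ·)) {Z : Set R} (hZ : Z.Nonempty) :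
    ∃ z ∈ Z, ∀ w ∈ Z, (R ∙ z).annihilator ≤ (R ∙ w).annihilator →
      (R ∙ w).annihilator ≤ (R ∙ z).annihilator := by
  have hsub : (fun z => (R ∙ z).annihilator) '' Z ⊆ annihilatorIdeals R := by
    rintro _ ⟨z, -, rfl⟩
    exact annihilator_span_singleton_mem_annihilatorIdeals z
  obtain ⟨_, ⟨z, hz, rfl⟩, hmax⟩ := (hgt.subset hsub).exists_maximal (hZ.image _)
  exact ⟨z, hz, fun w hw => hmax ⟨w, hw, rfl⟩⟩

theorem isPrime_annihilator_span_singleton {z : R} (hz : z ≠ 0)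
    (hmax : ∀ b : R, b * z ≠ 0 → (R ∙ (b * z)).annihilator ≤ (R ∙ z).annihilator) :
    (R ∙ z).annihilator.IsPrime := by
  refine ⟨fun h => hz ?_, fun {a b} hab => or_iff_not_imp_right.mpr fun hb => ?_⟩
  · simpa using mem_annihilator_span_singleton_iff_mul.mp ((Ideal.eq_top_iff_one _).mp h)
  rw [mem_annihilator_span_singleton_iff_mul] at hab hb ⊢
  refine mem_annihilator_span_singleton_iff_mul.mp (hmax b hb ?_)
  rw [mem_annihilator_span_singleton_iff_mul, ← mul_assoc, hab]

theorem colon_bot_singleton_eq_annihilator (x : R) :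
    (⊥ : Submodule R R).colon {x} = (R ∙ x).annihilator := by
  ext r
  rw [mem_colon_singleton, mem_bot, mem_annihilator_span_singleton]

theorem exists_isPrimary_annihilator_of_isAssociatedPrime
    (hgt : (annihilatorIdeals R).WellFoundedOn (· > ·)) {p : Ideal R}
    (hp : IsAssociatedPrime p R) :
    ∃ y : R, (R ∙ y).annihilator.IsPrimary ∧ (R ∙ y).annihilator.radical = p := by
  obtain ⟨hprime, x, hx⟩ := hp
  rw [colon_bot_singleton_eq_annihilator] at hx
  obtain ⟨_, ⟨r, hr, rfl⟩, hmax⟩ :=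
    exists_maximal_annihilator_span_singleton hgt (Z := {y | ∃ r ∉ p, y = r * x})
      ⟨x, 1, hprime.one_notMem, (one_mul x).symm⟩
  have hle : (R ∙ (r * x)).annihilator ≤ p := by
    intro a ha
    rw [mem_annihilator_span_singleton_iff_mul, ← mul_assoc] at ha
    have : a * r ∈ p := hx ▸ Ideal.le_radical (mem_annihilator_span_singleton_iff_mul.mpr ha)
    exact (hprime.mem_or_mem this).resolve_right hr
  have hrad : (R ∙ (r * x)).annihilator.radical = p :=
    le_antisymm (hprime.radical_le_iff.mpr hle)
      (hx ▸ Ideal.radical_mono (annihilator_span_singleton_le_mul r x))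
  refine ⟨r * x, Ideal.isPrimary_iff.mpr ⟨ne_top_of_le_ne_top hprime.ne_top hle, ?_⟩, hrad⟩
  intro a b hab
  refine or_iff_not_imp_right.mpr fun hb => ?_
  rw [hrad] at hb
  have hbr : b * r ∉ p := fun h => (hprime.mem_or_mem h).elim hb hr
  refine hmax (b * r * x) ⟨b * r, hbr, rfl⟩ ?_ ?_
  · simpa only [mul_assoc] using annihilator_span_singleton_le_mul b (r * x)
  · rw [mem_annihilator_span_singleton_iff_mul] at hab ⊢
    simpa only [mul_assoc] using hab

theorem exists_annihilator_span_singleton_eq_radical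
    (hgt : (annihilatorIdeals R).WellFoundedOn (· > ·)) {y : R}
    (hy : (R ∙ y).annihilator.IsPrimary) :
    ∃ z : R, (R ∙ z).annihilator = (R ∙ y).annihilator.radical := by
  have hy0 : y ≠ 0 := by
    rintro rfl
    exact hy.ne_top (by simp [annihilator_bot])
  obtain ⟨_, ⟨s, rfl, hz⟩, hmax⟩ :=
    exists_maximal_annihilator_span_singleton hgt (Z := {z | ∃ s, z = s * y ∧ z ≠ 0})
      ⟨y, 1, (one_mul y).symm, hy0⟩
  have hprime : (R ∙ (s * y)).annihilator.IsPrime := by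
    refine isPrime_annihilator_span_singleton hz fun b hb => ?_
    exact hmax _ ⟨b * s, (mul_assoc b s y).symm, hb⟩ (annihilator_span_singleton_le_mul b _)
  refine ⟨s * y, le_antisymm (fun a ha => ?_) ?_⟩
  · rw [mem_annihilator_span_singleton_iff_mul, ← mul_assoc, mul_comm a] at ha
    have hsa := (Ideal.isPrimary_iff.mp hy).2 (mem_annihilator_span_singleton_iff_mul.mpr ha)
    exact hsa.resolve_left fun hs => hz (mem_annihilator_span_singleton_iff_mul.mp hs)
  · exact hprime.radical_le_iff.mpr (annihilator_span_singleton_le_mul s y)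

theorem mem_annihilatorIdeals_of_isAssociatedPrime
    (hgt : (annihilatorIdeals R).WellFoundedOn (· > ·)) {p : Ideal R}
    (hp : IsAssociatedPrime p R) : p ∈ annihilatorIdeals R := by
  obtain ⟨y, hy, rfl⟩ := exists_isPrimary_annihilator_of_isAssociatedPrime hgt hp
  obtain ⟨z, hz⟩ := exists_annihilator_span_singleton_eq_radical hgt hy
  exact hz ▸ annihilator_span_singleton_mem_annihilatorIdeals z

theorem exists_infinite_lt_of_infinite
    (hlt : (annihilatorIdeals R).WellFoundedOn (· < ·)) {T : Set (Ideal R)}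
    (hT : ∀ p ∈ T, p.IsPrime ∧ p ∈ annihilatorIdeals R) (hinf : T.Infinite) :
    ∃ p ∈ T, {q ∈ T | p < q}.Infinite := by
  classical
  set 𝒮 := {I | ∃ F : Finset (Ideal R), ↑F ⊆ T ∧ I = F.inf id}
  have h𝒮 : 𝒮 ⊆ annihilatorIdeals R := by
    rintro _ ⟨F, hFT, rfl⟩
    exact Finset.inf_mem_annihilatorIdeals F fun p hp => (hT p (hFT hp)).2
  obtain ⟨_, ⟨F, hFT, rfl⟩, hmin⟩ := (hlt.subset h𝒮).exists_minimal ⟨⊤, ∅, by simp⟩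
  have hcover : T ⊆ ⋃ p ∈ F, {q ∈ T | p ≤ q} := by
    intro q hq
    have hle : F.inf id ≤ q := by
      refine (hmin ⟨insert q F, ?_, rfl⟩ ?_).trans ?_
      · exact Finset.coe_insert q F ▸ Set.insert_subset hq hFT
      · exact Finset.inf_mono (Finset.subset_insert q F)
      · exact Finset.inf_le (Finset.mem_insert_self q F)
    obtain ⟨p, hp, hpq⟩ := (hT q hq).1.inf_le'.mp hle
    exact Set.mem_biUnion hp ⟨hq, hpq⟩
  obtain ⟨p, hp, hinfp⟩ : ∃ p ∈ F, {q ∈ T | p ≤ q}.Infinite := by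
    by_contra! h
    exact hinf ((F.finite_toSet.biUnion h).subset hcover)
  refine ⟨p, hFT hp, (hinfp.sdiff (Set.finite_singleton p)).mono ?_⟩
  rintro q ⟨⟨hq, hpq⟩, hqp⟩
  exact ⟨hq, lt_of_le_of_ne hpq (Ne.symm hqp)⟩

theorem finite_of_forall_isPrime_mem_annihilatorIdeals
    (hlt : (annihilatorIdeals R).WellFoundedOn (· < ·))
    (hgt : (annihilatorIdeals R).WellFoundedOn (· > ·)) {P : Set (Ideal R)}
    (hP : ∀ p ∈ P, p.IsPrime ∧ p ∈ annihilatorIdeals R) : P.Finite := by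
  by_contra hinf
  set M := {p ∈ P | {q ∈ P | p < q}.Infinite}
  obtain ⟨p, ⟨hpP, hpM⟩, hmax⟩ :=
    (hgt.subset (s := M) fun p hp => (hP p hp.1).2).exists_maximal
      (exists_infinite_lt_of_infinite hlt hP hinf)
  obtain ⟨p', ⟨hp'P, hpp'⟩, hp'⟩ :=
    exists_infinite_lt_of_infinite hlt (fun q hq => hP q hq.1) hpM
  have hp'M : p' ∈ M := ⟨hp'P, hp'.mono fun q hq => ⟨hq.1.1, hq.2⟩⟩
  exact hpp'.not_ge (hmax hp'M hpp'.le)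

end

/-- If a commutative ring `R` satisfies DCC on annihilator ideals (annihilators of
subsets of `R`), then the set of associated primes of `R` is finite. -/
theorem stmt1 {R : Type*} [CommRing R]
    (hdcc : ∀ f : ℕ → Ideal R, (∀ n, f (n + 1) ≤ f n) →
      (∀ n, ∃ S : Set R, f n = (Submodule.span R S).annihilator) →
      ∃ n, ∀ m, n ≤ m → f m = f n) :
    (associatedPrimes R R).Finite := by
  have hlt := wellFoundedOn_lt_annihilatorIdeals hdcc
  have hgt := wellFoundedOn_gt_annihilatorIdeals hlt
  exact finite_of_forall_isPrime_mem_annihilatorIdeals hlt hgt fun p hp =>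
    ⟨hp.isPrime, mem_annihilatorIdeals_of_isAssociatedPrime hgt hp⟩
end

section
/- Let R be a commutative ring whose set of zero-divisors Z(R) is a finite union of prime ideals. Then R is a Marot ring, i.e., every regular ideal of R is generated by its regular elements. -/
/-!
Prime avoidance in a coset: if `z` lies outside finitely many primes `p₁, …, pₙ`, then every
coset `x + R z` meets the complement of `p₁ ∪ … ∪ pₙ`. Removing a minimal prime `p`,
induction gives `t` with `x + t z` outside the other primes; if `x + t z ∈ p`, add to `t` an
element `u` lying in all the other primes but not in `p`. Applied to a regular `z ∈ I`, each
`x ∈ I` is `(x + t z) - t z`, a combination of the regular elements `x + t z` and `z` of `I`.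
-/

namespace Ideal

variable {R : Type*} [CommRing R]

theorem exists_notMem_forall_mem_of_forall_not_le {p : Ideal R} [p.IsPrime]
    {S : Finset (Ideal R)} (h : ∀ q ∈ S, ¬q ≤ p) : ∃ u ∉ p, ∀ q ∈ S, u ∈ q := by
  have hinf : ¬S.inf id ≤ p := by
    rw [IsPrime.inf_le' ‹_›]
    rintro ⟨q, hq, hle⟩
    exact h q hq hle
  obtain ⟨u, hu, hup⟩ := SetLike.not_le_iff_exists.1 hinf
  exact ⟨u, hup, fun q hq => Submodule.mem_finsetInf.1 hu q hq⟩

theorem exists_add_mul_notMem_of_forall_notMem (s : Finset (Ideal R))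
    (hs : ∀ p ∈ s, p.IsPrime) {z : R} (hz : ∀ p ∈ s, z ∉ p) (x : R) :
    ∃ t, ∀ p ∈ s, x + t * z ∉ p := by
  classical
  induction s using Finset.strongInduction with
  | _ s ih =>
  rcases s.eq_empty_or_nonempty with rfl | hne
  · exact ⟨0, by simp⟩
  obtain ⟨p, hp_min⟩ := s.exists_minimal hne
  have hp : p ∈ s := hp_min.prop
  have := hs p hp
  obtain ⟨t, ht⟩ := ih (s.erase p) (Finset.erase_ssubset hp)
    (fun q hq => hs q (Finset.mem_of_mem_erase hq)) (fun q hq => hz q (Finset.mem_of_mem_erase hq))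
  by_cases hxp : x + t * z ∈ p
  swap
  · refine ⟨t, fun q hq => ?_⟩
    rcases eq_or_ne q p with rfl | hqp
    exacts [hxp, ht q (Finset.mem_erase.2 ⟨hqp, hq⟩)]
  obtain ⟨u, hup, huq⟩ : ∃ u ∉ p, ∀ q ∈ s.erase p, u ∈ q :=
    exists_notMem_forall_mem_of_forall_not_le fun q hq hqp =>
      Finset.ne_of_mem_erase hq (le_antisymm hqp (hp_min.le_of_le (Finset.mem_of_mem_erase hq) hqp))
  refine ⟨t + u, fun q hq => ?_⟩
  rw [add_mul, ← add_assoc]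
  rcases eq_or_ne q p with rfl | hqp
  · rw [Submodule.add_mem_iff_right _ hxp]
    exact (Ideal.IsPrime.mul_mem_iff_mem_or_mem ‹_›).not.2 (not_or.2 ⟨hup, hz q hq⟩)
  · have hq' : q ∈ s.erase p := Finset.mem_erase.2 ⟨hqp, hq⟩
    rw [Submodule.add_mem_iff_left _ (q.mul_mem_right z (huq q hq'))]
    exact ht q hq'

end Ideal

/-- If the set of zero-divisors of a commutative ring `R` is a finite union of prime
ideals, then `R` is a Marot ring: every regular ideal is generated by its regular
elements. -/
theorem stmt2 {R : Type*} [CommRing R] (s : Finset (Ideal R))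
    (hs : ∀ p ∈ s, p.IsPrime)
    (hZ : {x : R | x ∉ nonZeroDivisors R} = ⋃ p ∈ s, (p : Set R)) :
    ∀ I : Ideal R, (∃ z ∈ I, z ∈ nonZeroDivisors R) →
      I = Ideal.span ((I : Set R) ∩ (nonZeroDivisors R : Set R)) := by
  have hreg : ∀ a : R, a ∈ nonZeroDivisors R ↔ ∀ p ∈ s, a ∉ p := fun a => by
    simpa using (Set.ext_iff.1 hZ a).not
  rintro I ⟨z, hzI, hz⟩
  refine le_antisymm (fun x hx => ?_) (Ideal.span_le.2 fun _ h => h.1)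
  obtain ⟨t, ht⟩ := Ideal.exists_add_mul_notMem_of_forall_notMem s hs ((hreg z).1 hz) x
  have hxtz : x + t * z ∈ Ideal.span ((I : Set R) ∩ nonZeroDivisors R) :=
    Ideal.subset_span ⟨I.add_mem hx (I.mul_mem_left t hzI), (hreg _).2 ht⟩
  have hz' : z ∈ Ideal.span ((I : Set R) ∩ nonZeroDivisors R) := Ideal.subset_span ⟨hzI, hz⟩
  simpa using Ideal.sub_mem _ hxtz (Ideal.mul_mem_left _ t hz')
end

section
/- Let R be a commutative ring with DCC on annihilator ideals, and let p be a prime ideal of R. Then among annihilators (0 : I) where I ranges over finitely generated ideals contained in p, any minimal such element equals (0 : p). -/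
/-- Let `R` have DCC on annihilator ideals and let `p` be a prime ideal. Any element
that is minimal among the annihilators `(0 : I)` for `I` a finitely generated ideal
contained in `p` equals `(0 : p)`. -/
theorem stmt3 {R : Type*} [CommRing R]
    (hdcc : ∀ f : ℕ → Ideal R, (∀ n, f (n + 1) ≤ f n) →
      (∀ n, ∃ S : Set R, f n = (Submodule.span R S).annihilator) →
      ∃ n, ∀ m, n ≤ m → f m = f n)
    (p : Ideal R) (hp : p.IsPrime)
    (J : Ideal R) (hJfg : J.FG) (hJp : J ≤ p)
    (hmin : ∀ I : Ideal R, I.FG → I ≤ p →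
      I.annihilator ≤ J.annihilator → I.annihilator = J.annihilator) :
    J.annihilator = p.annihilator := by
  apply le_antisymm
  · intro x hx
    rw [Submodule.mem_annihilator] at hx ⊢
    intro a ha
    have hIfg : (J ⊔ Ideal.span {a}).FG := Submodule.FG.sup hJfg (Submodule.fg_span_singleton a)
    have hIp : J ⊔ Ideal.span {a} ≤ p :=
      sup_le hJp ((Ideal.span_singleton_le_iff_mem p).2 ha)
    have hann : (J ⊔ Ideal.span {a}).annihilator ≤ J.annihilator :=
      Submodule.annihilator_mono le_sup_left
    have heq := hmin _ hIfg hIp hann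
    have hxI : x ∈ (J ⊔ Ideal.span {a}).annihilator := by
      rw [heq, Submodule.mem_annihilator]; exact hx
    rw [Submodule.mem_annihilator] at hxI
    exact hxI a ((le_sup_right : Ideal.span {a} ≤ _) (Ideal.mem_span_singleton_self a))
  · exact Submodule.annihilator_mono hJp
end

section
/- Let R be an isoartinian commutative ring (every descending chain of ideals I₁ ⊇ I₂ ⊇ ⋯ eventually has Iₙ ≅ Iₙ₊₁ ≅ ⋯ as R-modules). Then every regular ideal of R is principal and generated by a regular element. -/
/-!
If `z ∈ I` is regular, the ideals `zᵏ I` and `zᵏ⁺¹ R` interleave into a descending chain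
`I ⊇ zR ⊇ zI ⊇ z²R ⊇ ⋯`, so for some `n` the isoartinian property gives `zⁿ I ≅ zⁿ⁺¹ R`.
Multiplication by a regular element is injective, hence `I ≅ zⁿ I` and `zⁿ⁺¹ R ≅ R`, so
`I ≅ R`. An ideal isomorphic to `R` is generated by the image of `1`, and that generator is
regular because the isomorphism is injective.
-/

/-- A commutative ring is isoartinian if every descending chain of ideals terminates
up to `R`-module isomorphism. -/
def IsoArtinian (R : Type*) [CommRing R] : Prop :=
  ∀ f : ℕ → Ideal R, (∀ n, f (n + 1) ≤ f n) →
    ∃ n, ∀ m, n ≤ m → Nonempty ((f m : Submodule R R) ≃ₗ[R] (f n : Submodule R R))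

open Pointwise nonZeroDivisors

noncomputable def Submodule.equivSmulOfIsSMulRegular {R M : Type*} [CommSemiring R]
    [AddCommMonoid M] [Module R M] {r : R} (hr : IsSMulRegular M r) (N : Submodule R M) :
    N ≃ₗ[R] (r • N : Submodule R M) :=
  (N.equivMapOfInjective (DistribSMul.toLinearMap R M r) hr).trans
    (LinearEquiv.ofEq _ _ Submodule.pointwise_smul_def.symm)

theorem Ideal.exists_mem_nonZeroDivisors_eq_span_singleton_of_linearEquiv {R : Type*}
    [CommSemiring R] {I : Ideal R} (e : I ≃ₗ[R] R) : ∃ z ∈ R⁰, I = Ideal.span {z} := by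
  have he (a : R) : (e.symm a : R) = a * e.symm 1 := by
    rw [← smul_eq_mul, ← Submodule.coe_smul, ← map_smul, smul_eq_mul, mul_one]
  refine ⟨e.symm 1, mem_nonZeroDivisors_iff_right.mpr fun a ha => ?_, ?_⟩
  · rwa [← he, ZeroMemClass.coe_eq_zero, LinearEquiv.map_eq_zero_iff] at ha
  · ext x
    refine ⟨fun hx => Ideal.mem_span_singleton'.mpr ⟨e ⟨x, hx⟩, ?_⟩, fun hx => ?_⟩
    · rw [← he, LinearEquiv.symm_apply_apply]
    · exact (Ideal.span_singleton_le_iff_mem I).mpr (e.symm 1).2 hx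

namespace IsoArtinian

variable {R : Type*} [CommRing R]

theorem exists_nonempty_linearEquiv_of_interleaved (h : IsoArtinian R) {a b : ℕ → Ideal R}
    (hba : ∀ k, b k ≤ a k) (hab : ∀ k, a (k + 1) ≤ b k) :
    ∃ n, Nonempty ((a n : Submodule R R) ≃ₗ[R] (b n : Submodule R R)) := by
  let f : ℕ → Ideal R := fun n => if Even n then a (n / 2) else b (n / 2)
  have hf_even (k : ℕ) : f (2 * k) = a k := by simp [f]
  have hf_odd (k : ℕ) : f (2 * k + 1) = b k := by simp [f, Nat.mul_add_div]
  have hf : ∀ n, f (n + 1) ≤ f n := by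
    intro n
    obtain ⟨k, rfl | rfl⟩ := Nat.even_or_odd' n
    · rw [hf_odd, hf_even]
      exact hba k
    · rw [show 2 * k + 1 + 1 = 2 * (k + 1) by ring, hf_even, hf_odd]
      exact hab k
  obtain ⟨N, hN⟩ := h f hf
  obtain ⟨ea⟩ := hN (2 * N) (by omega)
  obtain ⟨eb⟩ := hN (2 * N + 1) (by omega)
  rw [hf_even] at ea
  rw [hf_odd] at eb
  exact ⟨N, ⟨ea.trans eb.symm⟩⟩

theorem nonempty_linearEquiv_ring_of_mem_nonZeroDivisors (h : IsoArtinian R) {I : Ideal R}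
    {z : R} (hzI : z ∈ I) (hz : z ∈ R⁰) : Nonempty ((I : Submodule R R) ≃ₗ[R] R) := by
  have hreg (k : ℕ) : IsSMulRegular R (z ^ k) :=
    (isRegular_iff_mem_nonZeroDivisors.mpr (pow_mem hz k)).left.isSMulRegular
  have hzR : z • (⊤ : Submodule R R) ≤ I := by
    rintro _ ⟨y, -, rfl⟩
    exact I.mul_mem_right y hzI
  obtain ⟨n, ⟨e⟩⟩ := h.exists_nonempty_linearEquiv_of_interleaved
    (a := fun k => z ^ k • I) (b := fun k => z ^ (k + 1) • ⊤)
    (fun k => by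
      rw [pow_succ, mul_smul]
      exact smul_le_smul_left _ hzR)
    (fun k => smul_le_smul_left _ le_top)
  exact ⟨(Submodule.equivSmulOfIsSMulRegular (hreg n) _).trans <| e.trans <|
    (Submodule.equivSmulOfIsSMulRegular (hreg (n + 1)) ⊤).symm.trans Submodule.topEquiv⟩

end IsoArtinian

/-- In an isoartinian commutative ring, every regular ideal is principal and generated
by a regular element. -/
theorem stmt4 {R : Type*} [CommRing R] (h : IsoArtinian R) :
    ∀ I : Ideal R, (∃ z ∈ I, z ∈ nonZeroDivisors R) →
      ∃ z ∈ nonZeroDivisors R, I = Ideal.span {z} := by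
  rintro I ⟨z, hzI, hz⟩
  obtain ⟨e⟩ := h.nonempty_linearEquiv_ring_of_mem_nonZeroDivisors hzI hz
  exact Ideal.exists_mem_nonZeroDivisors_eq_span_singleton_of_linearEquiv e
end

section
/- Let R be a commutative ring in which every regular ideal is principal and generated by a regular element. Then R is a Dedekind ring in the sense of Griffin: every regular ideal of R is invertible, i.e., I⁻¹ I = R where I⁻¹ = {r ∈ T(R) | r·I ⊆ R} and T(R) is the total ring of fractions of R. -/
/-- If in a commutative ring `R` every regular ideal is principal and generated by a
regular element, then `R` is a Dedekind ring in the sense of Griffin: every regular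
ideal `I` is invertible, i.e. `I⁻¹ I = R` inside the total ring of fractions `T(R)`,
where `I⁻¹ = {r ∈ T(R) | r • I ⊆ R}`. -/
theorem stmt5 {R : Type*} [CommRing R]
    (h : ∀ I : Ideal R, (∃ z ∈ I, z ∈ nonZeroDivisors R) →
      ∃ z ∈ nonZeroDivisors R, I = Ideal.span {z}) :
    ∀ I : Ideal R, (∃ z ∈ I, z ∈ nonZeroDivisors R) →
      Submodule.span R {r : Localization (nonZeroDivisors R) |
          ∀ x ∈ I, r * algebraMap R (Localization (nonZeroDivisors R)) x ∈
            Set.range (algebraMap R (Localization (nonZeroDivisors R)))} *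
        Submodule.map (Algebra.linearMap R (Localization (nonZeroDivisors R))) I = 1 := by
  intro I hI
  obtain ⟨z, hz, rfl⟩ := h I hI
  set K := Localization (nonZeroDivisors R)
  apply le_antisymm
  · rw [Submodule.mul_le]
    intro r hr y hy
    obtain ⟨x, hx, rfl⟩ := hy
    rw [Submodule.one_eq_range]
    simp only [Algebra.linearMap_apply]
    induction hr using Submodule.span_induction with
    | mem r hr => exact hr x hx
    | zero => exact ⟨0, by simp⟩
    | add r s _ _ hr hs =>
        obtain ⟨a, ha⟩ := hr; obtain ⟨b, hb⟩ := hs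
        exact ⟨a + b, by simp [Algebra.linearMap_apply] at ha hb ⊢; rw [ha, hb, add_mul]⟩
    | smul c r _ hr =>
        obtain ⟨a, ha⟩ := hr
        exact ⟨c * a, by simp [Algebra.linearMap_apply, Algebra.smul_def] at ha ⊢; rw [ha, mul_assoc]⟩
  · rw [Submodule.one_le]
    have hzmem : algebraMap R K z ∈
        Submodule.map (Algebra.linearMap R K) (Ideal.span {z}) :=
      ⟨z, Ideal.mem_span_singleton_self z, rfl⟩
    have hrmem : (IsLocalization.mk' K (1 : R) ⟨z, hz⟩) ∈
        {r : K | ∀ x ∈ Ideal.span ({z} : Set R), r * algebraMap R K x ∈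
            Set.range (algebraMap R K)} := by
      intro x hx
      obtain ⟨c, rfl⟩ := Ideal.mem_span_singleton'.mp hx
      refine ⟨c, ?_⟩
      rw [map_mul, mul_comm ((algebraMap R K) c), ← mul_assoc,
        IsLocalization.mk'_spec_mk K 1 z hz, map_one, one_mul]
    have := Submodule.mul_mem_mul (Submodule.subset_span hrmem) hzmem
    rwa [IsLocalization.mk'_spec_mk K 1 z hz, map_one] at this
end

section
/- Let (R, m) be a commutative local ring whose maximal ideal m is principal. If the intersection ⋂_{i=1}^∞ mⁱ is zero, then every nonzero ideal of R is a power of m; in particular, the set of ideals of R is {0} ∪ {mⁱ | i ≥ 0}, and R is a principal ideal ring. -/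
/-- Let `(R, m)` be a commutative local ring with `m` principal. If `⋂_{i≥1} mⁱ = 0`,
then every nonzero ideal of `R` is a power of `m`; in particular every ideal belongs
to `{0} ∪ {mⁱ}` and `R` is a principal ideal ring. -/
theorem stmt6 {R : Type*} [CommRing R] [IsLocalRing R]
    (hm : ∃ z : R, IsLocalRing.maximalIdeal R = Ideal.span {z})
    (hint : ⨅ i : ℕ, IsLocalRing.maximalIdeal R ^ (i + 1) = ⊥) :
    (∀ I : Ideal R, I ≠ ⊥ → ∃ i : ℕ, I = IsLocalRing.maximalIdeal R ^ i) ∧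
      (∀ I : Ideal R, I = ⊥ ∨ ∃ i : ℕ, I = IsLocalRing.maximalIdeal R ^ i) ∧
      IsPrincipalIdealRing R := by
  obtain ⟨z, hz⟩ := hm
  have hpow : ∀ n : ℕ, IsLocalRing.maximalIdeal R ^ n = Ideal.span {z ^ n} := by
    intro n; rw [hz, Ideal.span_singleton_pow]
  have key : ∀ I : Ideal R, I ≠ ⊥ → ∃ i, I = IsLocalRing.maximalIdeal R ^ i := by
    intro I hI
    have hS : ∃ n, ¬ I ≤ IsLocalRing.maximalIdeal R ^ (n + 1) := by
      by_contra h
      push_neg at h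
      exact hI (le_bot_iff.mp (hint ▸ le_iInf h))
    classical
    set n := Nat.find hS with hn_def
    have hn : ¬ I ≤ IsLocalRing.maximalIdeal R ^ (n + 1) := Nat.find_spec hS
    have hIn : I ≤ IsLocalRing.maximalIdeal R ^ n := by
      rcases Nat.eq_zero_or_pos n with h0 | hpos
      · rw [h0]; simp
      · have := Nat.find_min hS (Nat.sub_lt hpos one_pos)
        rw [not_not] at this
        rwa [show Nat.find hS - 1 + 1 = n from Nat.sub_add_cancel hpos] at this
    obtain ⟨x, hxI, hx⟩ := SetLike.not_le_iff_exists.mp hn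
    have hxz : z ^ n ∣ x := by
      have := hIn hxI
      rw [hpow n] at this
      exact Ideal.mem_span_singleton.mp this
    obtain ⟨a, rfl⟩ := hxz
    have ha : IsUnit a := by
      by_contra hau
      apply hx
      have haM : a ∈ IsLocalRing.maximalIdeal R := hau
      have hzM : z ^ n ∈ IsLocalRing.maximalIdeal R ^ n := by
        rw [hpow n]; exact Ideal.mem_span_singleton_self _
      rw [pow_succ]
      exact Ideal.mul_mem_mul hzM haM
    obtain ⟨u, rfl⟩ := ha
    refine ⟨n, le_antisymm hIn ?_⟩
    rw [hpow n, Ideal.span_singleton_le_iff_mem]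
    have : z ^ n * ↑u * ↑u⁻¹ ∈ I := I.mul_mem_right _ hxI
    simpa [mul_assoc] using this
  refine ⟨key, fun I => ?_, ?_⟩
  · by_cases h : I = ⊥
    · exact Or.inl h
    · exact Or.inr (key I h)
  · constructor
    intro I
    by_cases h : I = ⊥
    · exact ⟨0, by rw [h]; exact (Ideal.span_singleton_eq_bot.mpr rfl).symm⟩
    · obtain ⟨i, rfl⟩ := key I h
      exact ⟨z ^ i, hpow i⟩
end

section
/- Let (R, m) be a commutative local ring with m principal, ⋂_{i=1}^∞ mⁱ = 0, and m not nilpotent. Then R is a discrete valuation ring (a local principal ideal domain with nonzero maximal ideal). -/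
/-- Let `(R, m)` be a commutative local ring with `m` principal, `⋂_{i≥1} mⁱ = 0`,
and `m` not nilpotent. Then `R` is a discrete valuation ring: a local principal ideal
domain with nonzero maximal ideal. -/
theorem stmt7 {R : Type*} [CommRing R] [IsLocalRing R]
    (hm : ∃ z : R, IsLocalRing.maximalIdeal R = Ideal.span {z})
    (hint : ⨅ i : ℕ, IsLocalRing.maximalIdeal R ^ (i + 1) = ⊥)
    (hnotnil : ∀ k : ℕ, IsLocalRing.maximalIdeal R ^ k ≠ ⊥) :
    IsDomain R ∧ IsPrincipalIdealRing R ∧ IsLocalRing.maximalIdeal R ≠ ⊥ := by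
  classical
  obtain ⟨z, hz⟩ := hm
  have hpow : ∀ k : ℕ, IsLocalRing.maximalIdeal R ^ k = Ideal.span {z ^ k} := by
    intro k
    rw [hz, Ideal.span_singleton_pow]
  have hzk : ∀ k : ℕ, z ^ k ≠ 0 := by
    intro k hk
    apply hnotnil k
    rw [hpow k, hk, Ideal.span_singleton_eq_bot.mpr rfl]
  -- every nonzero element is a unit times a power of z
  have key : ∀ a : R, a ≠ 0 → ∃ (n : ℕ) (u : R), IsUnit u ∧ a = u * z ^ n := by
    intro a ha
    have hex : ∃ i : ℕ, a ∉ IsLocalRing.maximalIdeal R ^ (i + 1) := by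
      by_contra h
      push_neg at h
      have : a ∈ (⊥ : Ideal R) := by
        rw [← hint]
        exact Ideal.mem_iInf.mpr h
      exact ha (Ideal.mem_bot.mp this)
    set n := Nat.find hex with hn
    have hn1 : a ∉ IsLocalRing.maximalIdeal R ^ (n + 1) := Nat.find_spec hex
    have hmem : a ∈ IsLocalRing.maximalIdeal R ^ n := by
      rcases Nat.eq_zero_or_pos n with h0 | hpos
      · simp [h0]
      · have h := Nat.find_min hex (show n - 1 < n by omega)
        rw [not_not] at h
        have : n - 1 + 1 = n := by omega
        rwa [this] at h
    rw [hpow n, Ideal.mem_span_singleton] at hmem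
    obtain ⟨c, hc⟩ := hmem
    refine ⟨n, c, ?_, by rw [hc, mul_comm]⟩
    by_contra hcu
    apply hn1
    have hcm : c ∈ IsLocalRing.maximalIdeal R :=
      (IsLocalRing.mem_maximalIdeal c).mpr hcu
    rw [hz, Ideal.mem_span_singleton] at hcm
    obtain ⟨d, hd⟩ := hcm
    rw [hpow (n + 1), Ideal.mem_span_singleton]
    exact ⟨d, by rw [hc, hd, pow_succ]; ring⟩
  haveI : NoZeroDivisors R := by
    constructor
    intro a b hab
    by_contra h
    push_neg at h
    obtain ⟨ha, hb⟩ := h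
    obtain ⟨n, u, hu, hau⟩ := key a ha
    obtain ⟨m, v, hv, hbv⟩ := key b hb
    have : u * v * z ^ (n + m) = 0 := by
      rw [pow_add]; rw [hau, hbv] at hab; linear_combination hab
    have huv : IsUnit (u * v) := hu.mul hv
    exact hzk (n + m) (by
      obtain ⟨w, hw⟩ := huv
      have := congrArg (fun x => (↑w⁻¹ : R) * x) this
      simp only [mul_zero] at this
      rw [← this, ← hw, ← mul_assoc, ← Units.val_mul, inv_mul_cancel] ; simp)
  have hdom : IsDomain R := NoZeroDivisors.to_isDomain R
  refine ⟨hdom, ?_, ?_⟩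
  · constructor
    intro I
    by_cases hI : I = ⊥
    · exact ⟨0, by simp [hI]⟩
    · obtain ⟨a, haI, ha⟩ := Submodule.exists_mem_ne_zero_of_ne_bot hI
      have hexI : ∃ n : ℕ, z ^ n ∈ I := by
        obtain ⟨n, u, hu, hau⟩ := key a ha
        obtain ⟨w, hw⟩ := hu
        refine ⟨n, ?_⟩
        have : z ^ n = (↑w⁻¹ : R) * a := by
          rw [hau, ← hw, ← mul_assoc, ← Units.val_mul, inv_mul_cancel]; simp
        rw [this]
        exact I.smul_mem _ haI
      set n0 := Nat.find hexI with hn0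
      refine ⟨z ^ n0, le_antisymm ?_ ?_⟩
      · intro b hb
        by_cases hb0 : b = 0
        · simp [hb0]
        · obtain ⟨m, v, hv, hbv⟩ := key b hb0
          have hzmI : z ^ m ∈ I := by
            obtain ⟨w, hw⟩ := hv
            have : z ^ m = (↑w⁻¹ : R) * b := by
              rw [hbv, ← hw, ← mul_assoc, ← Units.val_mul, inv_mul_cancel]; simp
            rw [this]
            exact I.smul_mem _ hb
          have hle : n0 ≤ m := Nat.find_min' hexI hzmI
          rw [Ideal.submodule_span_eq, Ideal.mem_span_singleton]
          exact dvd_trans (pow_dvd_pow z hle) ⟨v, by rw [hbv, mul_comm]⟩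
      · rw [Ideal.submodule_span_eq, Ideal.span_le, Set.singleton_subset_iff]
        exact Nat.find_spec hexI
  · intro h
    exact hnotnil 1 (by rw [pow_one]; exact h)
end

section
/- Let (R, m) be a commutative local ring with principal maximal ideal m. Then R is Noetherian if and only if ⋂_{i=1}^∞ mⁱ = 0. -/
/-- A commutative local ring `(R, m)` with principal maximal ideal `m` is Noetherian
if and only if `⋂_{i≥1} mⁱ = 0`. -/
theorem stmt8 {R : Type*} [CommRing R] [IsLocalRing R]
    (hm : ∃ z : R, IsLocalRing.maximalIdeal R = Ideal.span {z}) :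
    IsNoetherianRing R ↔ ⨅ i : ℕ, IsLocalRing.maximalIdeal R ^ (i + 1) = ⊥ := by
  obtain ⟨z, hz⟩ := hm
  constructor
  · intro hN
    have h := Ideal.iInf_pow_eq_bot_of_isLocalRing (IsLocalRing.maximalIdeal R)
      (IsLocalRing.maximalIdeal.isMaximal R).ne_top
    refine le_antisymm ?_ bot_le
    rw [← h]
    exact le_iInf fun i => iInf_le_of_le i (Ideal.pow_le_pow_right (by omega))
  · intro h
    rw [isNoetherianRing_iff_ideal_fg]
    intro I
    by_cases hI : I = ⊥
    · exact hI ▸ ⟨∅, by simp⟩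
    -- find least n with ¬ I ≤ m^(n+1)
    have hex : ∃ n : ℕ, ¬ I ≤ IsLocalRing.maximalIdeal R ^ (n + 1) := by
      by_contra hc
      push_neg at hc
      exact hI (le_antisymm (h ▸ le_iInf hc) bot_le)
    classical
    let n := Nat.find hex
    have hn1 : ¬ I ≤ IsLocalRing.maximalIdeal R ^ (n + 1) := Nat.find_spec hex
    have hn2 : I ≤ IsLocalRing.maximalIdeal R ^ n := by
      cases' Nat.eq_zero_or_pos n with h0 h0
      · simp [h0]
      · have := Nat.find_min hex (m := n - 1) (by omega)
        push_neg at this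
        simpa [Nat.sub_add_cancel h0] using this
    obtain ⟨x, hxI, hxn⟩ := SetLike.not_le_iff_exists.mp hn1
    have hxm : x ∈ Ideal.span {z ^ n} := by
      have := hn2 hxI
      rwa [hz, Ideal.span_singleton_pow] at this
    obtain ⟨a, hax⟩ := Ideal.mem_span_singleton'.mp hxm
    have ha : IsUnit a := by
      by_contra hu
      apply hxn
      rw [pow_succ', ← hax]
      exact Ideal.mul_mem_mul (by simpa [IsLocalRing.mem_maximalIdeal] using hu)
        (by rw [hz, Ideal.span_singleton_pow]; exact Ideal.mem_span_singleton_self _)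
    have hzn : z ^ n ∈ I := by
      obtain ⟨u, rfl⟩ := ha
      have : (↑u⁻¹ : R) * x ∈ I := Ideal.mul_mem_left _ _ hxI
      rwa [← hax, ← mul_assoc, ← Units.val_mul, inv_mul_cancel, Units.val_one, one_mul] at this
    have : I = IsLocalRing.maximalIdeal R ^ n := by
      refine le_antisymm hn2 ?_
      rw [hz, Ideal.span_singleton_pow]
      rwa [Ideal.span_singleton_le_iff_mem]
    rw [this, hz, Ideal.span_singleton_pow]
    exact ⟨{z ^ n}, by simp⟩
end

section
/- Let R be a one-dimensional commutative Noetherian ring with a unique minimal prime ideal p, and suppose every maximal ideal of R is principal and generated by a regular element. Then p = 0, i.e., R is a domain. -/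
/-!
Every prime contains the unique minimal prime `p`, and elements of a minimal prime are zero
divisors, so the regular generator `z` of a maximal ideal `m` lies outside `p`. Hence
`p ⊆ (z)` gives `p = z p = m p`, and since `p` is finitely generated, Nakayama's lemma at every
maximal ideal forces `p = 0`.
-/

theorem Submodule.eq_bot_of_forall_isMaximal_le_smul {R M : Type*} [CommRing R]
    [AddCommGroup M] [Module R M] {N : Submodule R M} (hN : N.FG)
    (h : ∀ m : Ideal R, m.IsMaximal → N ≤ m • N) : N = ⊥ := by
  rw [← annihilator_eq_top_iff]
  by_contra hne
  obtain ⟨m, hm, hle⟩ := Ideal.exists_le_maximal _ hne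
  obtain ⟨r, hr1, hr⟩ := exists_sub_one_mem_and_smul_eq_zero_of_fg_of_le_smul m N hN (h m hm)
  have hrm : r ∈ m := hle (mem_annihilator.mpr hr)
  exact hm.ne_top ((m.eq_top_iff_one).mpr (by simpa using m.sub_mem hrm hr1))

theorem Ideal.IsPrime.le_span_singleton_smul {R : Type*} [CommRing R] {p : Ideal R}
    (hp : p.IsPrime) {z : R} (hz : z ∉ p) (hle : p ≤ span {z}) : p ≤ span {z} • p := by
  intro x hx
  obtain ⟨y, rfl⟩ := mem_span_singleton'.mp (hle hx)
  have hy : y ∈ p := (hp.mem_or_mem hx).resolve_right hz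
  simpa [mul_comm y z] using mul_mem_mul (mem_span_singleton_self z) hy

theorem Ideal.le_of_minimalPrimes_eq_singleton {R : Type*} [CommRing R] {p : Ideal R}
    (hp : minimalPrimes R = {p}) {q : Ideal R} (hq : q.IsPrime) : p ≤ q := by
  obtain ⟨p', hp', hle⟩ := exists_minimalPrimes_le (I := ⊥) (J := q) bot_le
  rw [show (⊥ : Ideal R).minimalPrimes = minimalPrimes R from rfl, hp] at hp'
  exact hp' ▸ hle

theorem stmt10_general {R : Type*} [CommRing R] [IsNoetherianRing R]
    (p : Ideal R) (hp : minimalPrimes R = {p})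
    (hmax : ∀ m : Ideal R, m.IsMaximal →
      ∃ z ∈ nonZeroDivisors R, m = Ideal.span {z}) :
    p = ⊥ := by
  have hp_min : p ∈ minimalPrimes R := hp ▸ rfl
  refine Submodule.eq_bot_of_forall_isMaximal_le_smul (IsNoetherian.noetherian p) fun m hm ↦ ?_
  obtain ⟨z, hz, rfl⟩ := hmax m hm
  have hzp : z ∉ p := fun hzp ↦ notMem_nonZeroDivisors_of_mem_mem_minimalPrimes hzp hp_min hz
  exact hp_min.1.1.le_span_singleton_smul hzp (Ideal.le_of_minimalPrimes_eq_singleton hp hm.isPrime)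

/-- Let `R` be a one-dimensional commutative Noetherian ring with a unique minimal
prime `p`, and suppose every maximal ideal of `R` is principal and generated by a
regular element. Then `p = 0`. -/
theorem stmt10 {R : Type*} [CommRing R] [IsNoetherianRing R]
    (hdim : ringKrullDim R = 1)
    (p : Ideal R) (hp : minimalPrimes R = {p})
    (hmax : ∀ m : Ideal R, m.IsMaximal →
      ∃ z ∈ nonZeroDivisors R, m = Ideal.span {z}) :
    p = ⊥ :=
  stmt10_general p hp hmax
end

section
/- Let R = ℤ[x₁, x₂, …]/(xᵢxⱼ for j > i, xᵢ³ for all i), and let p = ⟨x₁, x₂, …⟩. Then p³ = 0, p = (0 : x₁²), the zero ideal of R is p-primary, and Ass R = {p} = Min R; moreover R is not Noetherian and not isoartinian, witnessed by the strictly descending chain Jₖ = ⟨x_{2k}, x_{2k+1}, …⟩ whose consecutive terms have distinct annihilators. -/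
set_option synthInstance.maxHeartbeats 1000000
set_option maxHeartbeats 1000000

/-- `R = ℤ[x₁, x₂, …]/(xᵢxⱼ for j > i, xᵢ³ for all i)`. -/
abbrev RingEx16 : Type _ :=
  MvPolynomial ℕ ℤ ⧸ (Ideal.span ({p : MvPolynomial ℕ ℤ |
      ∃ i j : ℕ, i < j ∧ p = MvPolynomial.X i * MvPolynomial.X j} ∪
    {p : MvPolynomial ℕ ℤ | ∃ i : ℕ, p = (MvPolynomial.X i) ^ 3}))

/-- The residue class of `xᵢ` in `RingEx16`. -/
noncomputable def xEx16 (i : ℕ) : RingEx16 :=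
  Ideal.Quotient.mk _ (MvPolynomial.X i : MvPolynomial ℕ ℤ)

/-- The ideal `p = ⟨x₁, x₂, …⟩` of `RingEx16`. -/
noncomputable def pEx16 : Ideal RingEx16 :=
  Ideal.span (Set.range xEx16)

/-- The ideal `Jₖ = ⟨x_{2k}, x_{2k+1}, …⟩` of `RingEx16`. -/
noncomputable def JEx16 (k : ℕ) : Ideal RingEx16 :=
  Ideal.span (Set.range fun i : ℕ => xEx16 (2 * k + i))

/-!
The defining ideal is generated by monomials, so `R` is the free `ℤ`-module on `1`, `xᵢ`, `xᵢ²`;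
in particular `R` is `ℤ`-torsion-free and `xᵢ² ≠ 0`. Any product of three variables is a
relation, so `p³ = 0`, and `p` is the kernel of the augmentation `R → ℤ`, hence prime. An element
outside `p` is a nonzero integer plus a nilpotent, hence a nonzerodivisor; this makes `0` a
`p`-primary ideal and pins down `Ass R`, `Min R` and `(0 : x₁²)`. Finally `x_{2k}` annihilates
`J_{k+1}` but not `J_k` (as `x_{2k}² ≠ 0`), so the annihilators of the `Jₖ` increase strictly:
`R` is not Noetherian, and no two `Jₖ` are isomorphic since annihilators are isomorphism invariants.
-/

open MvPolynomial nonZeroDivisors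

theorem mem_nonZeroDivisors_add_of_isNilpotent {R : Type*} [CommRing R] {c n : R}
    (hc : c ∈ R⁰) (hn : IsNilpotent n) : c + n ∈ R⁰ := by
  obtain ⟨k, hk⟩ := hn
  rw [mem_nonZeroDivisors_iff_right]
  intro x hx
  have hpow : ∀ m : ℕ, x * c ^ m = x * (-n) ^ m := by
    intro m
    induction m with
    | zero => simp
    | succ m ih => rw [pow_succ, pow_succ]; linear_combination c * ih + (-n) ^ m * hx
  rw [← mul_right_mem_nonZeroDivisors_eq_zero_iff (pow_mem hc k), hpow, neg_pow, hk, mul_zero,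
    mul_zero]

theorem MvPolynomial.sub_C_constantCoeff_mem_idealOfVars {σ R : Type*} [CommRing R]
    (f : MvPolynomial σ R) : f - C (constantCoeff f) ∈ idealOfVars σ R := by
  simpa using (mem_pow_idealOfVars_iff' 1 (f - C (constantCoeff f))).mpr fun x hx => by
    rw [Nat.lt_one_iff, Finsupp.degree_eq_zero_iff] at hx
    subst hx
    simp [constantCoeff_eq]

theorem associatedPrimes_self_subset_of_isPrimary {R : Type*} [CommRing R]
    (h : (⊥ : Ideal R).IsPrimary) : associatedPrimes R R ⊆ {(⊥ : Ideal R).radical} :=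
  fun _ hJ => IsAssociatedPrime.eq_radical h
    ((LinearEquiv.isAssociatedPrime_iff (Submodule.quotEquivOfEqBot ⊥ rfl).symm).mp hJ)

theorem Submodule.colon_bot_singleton {R : Type*} [CommRing R] (x : R) :
    (⊥ : Submodule R R).colon {x} = Ideal.torsionOf R R x :=
  Ideal.ext fun a => by
    rw [Submodule.mem_colon_singleton, Submodule.mem_bot, Ideal.mem_torsionOf_iff]

theorem not_isoArtinian_of_annihilator_ne {R : Type*} [CommRing R] (f : ℕ → Ideal R)
    (hf : ∀ n, f (n + 1) ≤ f n) (hann : ∀ n, (f (n + 1)).annihilator ≠ (f n).annihilator) :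
    ¬ IsoArtinian R := fun h => by
  obtain ⟨n, hn⟩ := h f hf
  obtain ⟨e⟩ := hn (n + 1) n.le_succ
  exact hann n e.annihilator_eq

namespace RingEx16

noncomputable abbrev relations : Ideal (MvPolynomial ℕ ℤ) :=
  Ideal.span ({p : MvPolynomial ℕ ℤ |
      ∃ i j : ℕ, i < j ∧ p = MvPolynomial.X i * MvPolynomial.X j} ∪
    {p : MvPolynomial ℕ ℤ | ∃ i : ℕ, p = (MvPolynomial.X i) ^ 3})

def relationExponents : Set (ℕ →₀ ℕ) :=
  {d | ∃ i j, i < j ∧ d = Finsupp.single i 1 + Finsupp.single j 1} ∪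
    {d | ∃ i, d = Finsupp.single i 3}

noncomputable abbrev mk : MvPolynomial ℕ ℤ →+* RingEx16 := Ideal.Quotient.mk relations

lemma relations_eq_span_monomial :
    relations = Ideal.span ((fun s => monomial s (1 : ℤ)) '' relationExponents) := by
  rw [relationExponents, Set.image_union]
  refine congrArg Ideal.span (congrArg₂ (· ∪ ·) ?_ ?_) <;> ext p
  · simp [X, monomial_mul, eq_comm]
  · simp [X_pow_eq_monomial, eq_comm]

lemma mk_X (i : ℕ) : mk (X i) = xEx16 i := rfl

lemma mk_surjective : Function.Surjective mk := Ideal.Quotient.mk_surjective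

lemma mk_eq_zero_iff {f : MvPolynomial ℕ ℤ} :
    mk f = 0 ↔ ∀ d ∈ f.support, ∃ s ∈ relationExponents, s ≤ d := by
  rw [Ideal.Quotient.eq_zero_iff_mem, relations_eq_span_monomial, mem_ideal_span_monomial_image]

lemma x_mul_x_of_lt {i j : ℕ} (h : i < j) : xEx16 i * xEx16 j = 0 := by
  rw [← mk_X, ← mk_X, ← map_mul, Ideal.Quotient.eq_zero_iff_mem]
  exact Ideal.subset_span (Or.inl ⟨i, j, h, rfl⟩)

lemma x_mul_x_of_ne {i j : ℕ} (h : i ≠ j) : xEx16 i * xEx16 j = 0 :=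
  h.lt_or_gt.elim x_mul_x_of_lt fun h => by rw [mul_comm]; exact x_mul_x_of_lt h

lemma x_pow_three (i : ℕ) : xEx16 i ^ 3 = 0 := by
  rw [← mk_X, ← map_pow, Ideal.Quotient.eq_zero_iff_mem]
  exact Ideal.subset_span (Or.inr ⟨i, rfl⟩)

lemma x_mul_x_mul_x (i j k : ℕ) : xEx16 i * xEx16 j * xEx16 k = 0 := by
  rcases eq_or_ne i j with rfl | hij
  · rcases eq_or_ne i k with rfl | hik
    · rw [← pow_three', x_pow_three]
    · rw [mul_assoc, x_mul_x_of_ne hik, mul_zero]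
  · rw [x_mul_x_of_ne hij, zero_mul]

lemma x_sq_ne_zero (i : ℕ) : xEx16 i ^ 2 ≠ 0 := by
  rw [← mk_X, ← map_pow, Ne, mk_eq_zero_iff, X_pow_eq_monomial, support_monomial,
    if_neg one_ne_zero]
  simp only [Finset.mem_singleton, forall_eq, not_exists, not_and]
  rintro _ (⟨a, b, hab, rfl⟩ | ⟨a, rfl⟩) hle
  · have ha := hle a
    have hb := hle b
    simp only [Finsupp.add_apply, Finsupp.single_apply, if_pos] at ha hb
    split_ifs at ha hb <;> omega
  · have ha := hle a
    simp only [Finsupp.single_apply, if_pos] at ha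
    split_ifs at ha <;> omega

instance : Nontrivial RingEx16 := nontrivial_of_ne _ _ (x_sq_ne_zero 0)

lemma intCast_mem_nonZeroDivisors {c : ℤ} (hc : c ≠ 0) : (c : RingEx16) ∈ RingEx16⁰ := by
  rw [mem_nonZeroDivisors_iff_right]
  intro a ha
  obtain ⟨f, rfl⟩ := mk_surjective a
  rw [← map_intCast mk, ← map_mul, mk_eq_zero_iff] at ha
  rw [mk_eq_zero_iff]
  intro d hd
  apply ha d
  rw [← map_intCast (C : ℤ →+* MvPolynomial ℕ ℤ), Int.cast_id, mem_support_iff, mul_comm,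
    coeff_C_mul]
  exact mul_ne_zero hc (mem_support_iff.mp hd)

noncomputable def augmentation : RingEx16 →+* ℤ :=
  Ideal.Quotient.lift relations constantCoeff fun _ ha => by
    have : relations ≤ RingHom.ker (constantCoeff : MvPolynomial ℕ ℤ →+* ℤ) :=
      Ideal.span_le.mpr (by rintro _ (⟨i, j, -, rfl⟩ | ⟨i, rfl⟩) <;> simp)
    exact this ha

lemma augmentation_mk (f : MvPolynomial ℕ ℤ) : augmentation (mk f) = constantCoeff f :=
  Ideal.Quotient.lift_mk _ _ _

lemma pEx16_eq_map_idealOfVars : pEx16 = (idealOfVars ℕ ℤ).map mk := by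
  rw [idealOfVars, Ideal.map_span, ← Set.range_comp]
  rfl

lemma sub_augmentation_mem (a : RingEx16) : a - (augmentation a : RingEx16) ∈ pEx16 := by
  obtain ⟨f, rfl⟩ := mk_surjective a
  have hsub : mk f - ((constantCoeff f : ℤ) : RingEx16) = mk (f - C (constantCoeff f)) := by
    simp
  rw [augmentation_mk, hsub, pEx16_eq_map_idealOfVars]
  exact Ideal.mem_map_of_mem _ (sub_C_constantCoeff_mem_idealOfVars f)

lemma ker_augmentation : RingHom.ker augmentation = pEx16 :=
  le_antisymm (fun a ha => by simpa [RingHom.mem_ker.mp ha] using sub_augmentation_mem a)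
    (Ideal.span_le.mpr (Set.range_subset_iff.mpr fun i => by
      simp [← mk_X, augmentation_mk]))

lemma isPrime_pEx16 : pEx16.IsPrime := ker_augmentation ▸ RingHom.ker_isPrime _

lemma pEx16_pow_three : pEx16 ^ 3 = ⊥ := by
  rw [pow_three', pEx16, Ideal.span_mul_span', Ideal.span_mul_span', Ideal.span_eq_bot]
  rintro _ ⟨_, ⟨_, ⟨i, rfl⟩, _, ⟨j, rfl⟩, rfl⟩, _, ⟨k, rfl⟩, rfl⟩
  exact x_mul_x_mul_x i j k

lemma isNilpotent_of_mem_pEx16 {a : RingEx16} (ha : a ∈ pEx16) : IsNilpotent a :=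
  ⟨3, by rw [← Ideal.mem_bot, ← pEx16_pow_three]; exact Ideal.pow_mem_pow ha 3⟩

lemma mem_nonZeroDivisors_of_notMem_pEx16 {a : RingEx16} (ha : a ∉ pEx16) : a ∈ RingEx16⁰ := by
  have hε : augmentation a ≠ 0 := fun h => ha (ker_augmentation ▸ RingHom.mem_ker.mpr h)
  simpa using mem_nonZeroDivisors_add_of_isNilpotent (intCast_mem_nonZeroDivisors hε)
    (isNilpotent_of_mem_pEx16 (sub_augmentation_mem a))

lemma radical_bot : (⊥ : Ideal RingEx16).radical = pEx16 :=
  le_antisymm (isPrime_pEx16.radical_le_iff.mpr bot_le) fun _ ha => isNilpotent_of_mem_pEx16 ha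

lemma isPrimary_bot : (⊥ : Ideal RingEx16).IsPrimary := by
  refine Ideal.isPrimary_iff.mpr ⟨bot_ne_top, fun {x y} hxy => ?_⟩
  by_cases hy : y ∈ pEx16
  · exact Or.inr (radical_bot ▸ hy)
  · exact Or.inl
      ((mul_right_mem_nonZeroDivisors_eq_zero_iff (mem_nonZeroDivisors_of_notMem_pEx16 hy)).mp hxy)

lemma pEx16_eq_torsionOf : pEx16 = Ideal.torsionOf RingEx16 RingEx16 (xEx16 0 ^ 2) := by
  refine le_antisymm (Ideal.span_le.mpr (Set.range_subset_iff.mpr fun i => ?_)) fun a ha => ?_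
  · rw [SetLike.mem_coe, Ideal.mem_torsionOf_iff, smul_eq_mul, sq, ← mul_assoc, x_mul_x_mul_x]
  · by_contra hp
    rw [Ideal.mem_torsionOf_iff, smul_eq_mul,
      mul_left_mem_nonZeroDivisors_eq_zero_iff (mem_nonZeroDivisors_of_notMem_pEx16 hp)] at ha
    exact x_sq_ne_zero 0 ha

lemma associatedPrimes_eq : associatedPrimes RingEx16 RingEx16 = {pEx16} := by
  refine (radical_bot ▸ associatedPrimes_self_subset_of_isPrimary isPrimary_bot).antisymm ?_
  rintro _ rfl
  refine ⟨isPrime_pEx16, xEx16 0 ^ 2, ?_⟩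
  rw [Submodule.colon_bot_singleton, ← pEx16_eq_torsionOf, isPrime_pEx16.radical]

lemma minimalPrimes_eq : minimalPrimes RingEx16 = {pEx16} := by
  rw [← radical_bot]
  exact Ideal.minimalPrimes_eq_subsingleton isPrimary_bot

lemma x_mem_J (k : ℕ) : xEx16 (2 * k) ∈ JEx16 k := Ideal.subset_span ⟨0, rfl⟩

lemma J_succ_le (k : ℕ) : JEx16 (k + 1) ≤ JEx16 k :=
  Ideal.span_mono (Set.range_subset_iff.mpr fun i => ⟨i + 2, congrArg xEx16 (by ring)⟩)

lemma x_mem_annihilator_J_succ (k : ℕ) : xEx16 (2 * k) ∈ (JEx16 (k + 1)).annihilator := by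
  rw [JEx16, Submodule.mem_annihilator_span]
  rintro ⟨_, i, rfl⟩
  exact x_mul_x_of_lt (by omega)

lemma x_notMem_annihilator_J (k : ℕ) : xEx16 (2 * k) ∉ (JEx16 k).annihilator := fun h =>
  x_sq_ne_zero (2 * k) (by rw [sq]; exact Submodule.mem_annihilator.mp h _ (x_mem_J k))

lemma annihilator_J_lt (k : ℕ) : (JEx16 k).annihilator < (JEx16 (k + 1)).annihilator :=
  (Submodule.annihilator_mono (J_succ_le k)).lt_of_not_ge fun h =>
    x_notMem_annihilator_J k (h (x_mem_annihilator_J_succ k))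

lemma J_succ_lt (k : ℕ) : JEx16 (k + 1) < JEx16 k :=
  (J_succ_le k).lt_of_ne fun h => (annihilator_J_lt k).ne (by rw [h])

lemma not_isNoetherianRing : ¬ IsNoetherianRing RingEx16 := fun _ =>
  not_strictMono_of_wellFoundedGT (fun k => (JEx16 k).annihilator)
    (strictMono_nat_of_lt_succ annihilator_J_lt)

end RingEx16

/-- In `R = ℤ[x₁, x₂, …]/(xᵢxⱼ for j > i, xᵢ³)` with `p = ⟨x₁, x₂, …⟩` one has
`p³ = 0`, `p = (0 : x₁²)`, the zero ideal is `p`-primary, `Ass R = {p} = Min R`,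
`R` is not Noetherian, and `R` is not isoartinian, witnessed by the strictly
descending chain `Jₖ = ⟨x_{2k}, x_{2k+1}, …⟩` whose consecutive terms have distinct
annihilators. -/
theorem stmt16 :
    pEx16 ^ 3 = ⊥ ∧
      pEx16 = Ideal.torsionOf RingEx16 RingEx16 (xEx16 0 ^ 2) ∧
      (⊥ : Ideal RingEx16).IsPrimary ∧ (⊥ : Ideal RingEx16).radical = pEx16 ∧
      associatedPrimes RingEx16 RingEx16 = {pEx16} ∧
      minimalPrimes RingEx16 = {pEx16} ∧
      ¬ IsNoetherianRing RingEx16 ∧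
      (∀ k : ℕ, JEx16 (k + 1) < JEx16 k ∧
        (JEx16 (k + 1)).annihilator ≠ (JEx16 k).annihilator) ∧
      ¬ IsoArtinian RingEx16 :=
  ⟨RingEx16.pEx16_pow_three, RingEx16.pEx16_eq_torsionOf, RingEx16.isPrimary_bot,
    RingEx16.radical_bot, RingEx16.associatedPrimes_eq, RingEx16.minimalPrimes_eq,
    RingEx16.not_isNoetherianRing,
    fun k => ⟨RingEx16.J_succ_lt k, (RingEx16.annihilator_J_lt k).ne'⟩,
    not_isoArtinian_of_annihilator_ne JEx16 RingEx16.J_succ_le fun k =>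
      (RingEx16.annihilator_J_lt k).ne'⟩
end
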